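/- In the renewal setup, let 𝕊 be a finite set and let (r_k)_{k≥0} be 𝕊-valued random variables (the mode active on [t_k, t_{k+1})). For each i ∈ 𝕊 let λ_i : ℝ → ℝ be continuous with |λ_i(s)| ≤ L for all s and some constant L > 0, and suppose the per-interval integrals W_k = ∫_{t_{k−1}}^{t_k} λ_{r_{k−1}}(h) dh, k ≥ 1, form an i.i.d. integrable sequence with E[W₁] ≤ w̄. Let μ ≥ 1 be a constant with (w̄ + ln μ)/θ < 0, and let α₁, α₂ be class-K∞ functions. Suppose that for almost every ω there is a continuous trajectory x(ω,·) : [0,∞) → ℝⁿ and functions V_i : [0,∞) × ℝⁿ → ℝ such that: α₁(‖y‖) ≤ V_i(t, y) ≤ α₂(‖y‖) for all i, t, y; for each k the map t ↦ V_{r_k}(t, x(ω,t)) is continuous on [t_k, t_{k+1}], differentiable on (t_k, t_{k+1}) with derivative ≤ λ_{r_k}(t)·V_{r_k}(t, x(ω,t)); and V_{r_k}(t_k, x(ω,t_k)) ≤ μ·V_{r_{k−1}}(t_k, x(ω,t_k)) for each k ≥ 1. Then P[ x(t) → 0 as t → ∞ ] = 1. -/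

import Mathlib

open Set Filter MeasureTheory ProbabilityTheory

/-- The renewal (arrival) times: `renewalTime S k ω = S 1 ω + ⋯ + S k ω`, with
`renewalTime S 0 ω = 0`. -/
noncomputable def renewalTime {Ω : Type*} (S : ℕ → Ω → ℝ) (k : ℕ) (ω : Ω) : ℝ :=
  ∑ j ∈ Finset.Icc 1 k, S j ω

/-- A function `α : [0,∞) → [0,∞)` is of class K∞ if it is continuous, strictly
increasing, vanishes at `0`, and tends to infinity. -/
def IsClassKInf (α : ℝ → ℝ) : Prop :=
  ContinuousOn α (Set.Ici 0) ∧ StrictMonoOn α (Set.Ici 0) ∧ α 0 = 0 ∧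
    (∀ s ≥ (0 : ℝ), 0 ≤ α s) ∧ Filter.Tendsto α Filter.atTop Filter.atTop

open Topology

/-!
Between two renewal times Grönwall's inequality multiplies the Lyapunov value by at most
`exp W_k`, and every switch by at most `μ`. Hence on `[t_k, t_{k+1}]` the Lyapunov value is at
most `V₀ · exp (k log μ + W₁ + ⋯ + W_k + L S(k+1))`. By the strong law of large numbers the
exponent divided by `k` tends to `log μ + E[W₁] < 0` (the last term vanishes after division
because `t_k / k → θ`), so the bound tends to `0`, and `α₁(‖x(t)‖) → 0` forces `x(t) → 0`.
-/

theorem le_mul_exp_integral_of_deriv_le {f g : ℝ → ℝ} {a b t : ℝ} (hg : Continuous g)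
    (hf : ContinuousOn f (Icc a b)) (hf' : DifferentiableOn ℝ f (Ioo a b))
    (hle : ∀ s ∈ Ioo a b, deriv f s ≤ g s * f s) (ht : t ∈ Icc a b) :
    f t ≤ f a * Real.exp (∫ s in a..t, g s) := by
  set G : ℝ → ℝ := fun t => ∫ s in a..t, g s
  have hG : ∀ s, HasDerivAt G (g s) s := fun s => (hg.integral_hasStrictDerivAt a s).hasDerivAt
  set u : ℝ → ℝ := fun s => f s * Real.exp (-G s)
  have hu_deriv : ∀ s ∈ Ioo a b,
      HasDerivAt u ((deriv f s - g s * f s) * Real.exp (-G s)) s := fun s hs => by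
    have hfs := (hf' s hs).differentiableAt (isOpen_Ioo.mem_nhds hs)
    exact (hfs.hasDerivAt.mul (hG s).neg.exp).congr_deriv (by simp only [Pi.neg_apply]; ring)
  have hu_anti : AntitoneOn u (Icc a b) := by
    refine antitoneOn_of_deriv_nonpos (convex_Icc a b)
      (hf.mul (continuous_iff_continuousAt.2 fun s => (hG s).continuousAt).neg.rexp.continuousOn)
      ?_ ?_ <;> rw [interior_Icc]
    · exact fun s hs => (hu_deriv s hs).differentiableAt.differentiableWithinAt
    · intro s hs
      rw [(hu_deriv s hs).deriv]
      exact mul_nonpos_of_nonpos_of_nonneg (sub_nonpos.2 (hle s hs)) (Real.exp_pos _).le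
  have hut : u t ≤ f a := by
    simpa [u, G] using hu_anti (left_mem_Icc.2 (ht.1.trans ht.2)) ht ht.1
  calc f t = u t * Real.exp (G t) := by simp only [u, mul_assoc, ← Real.exp_add, neg_add_cancel,
          Real.exp_zero, mul_one]
    _ ≤ f a * Real.exp (G t) := by gcongr

theorem tendsto_atTop_of_tendsto_div_natCast {u : ℕ → ℝ} {c : ℝ} (hc : 0 < c)
    (hu : Tendsto (fun k => u k / k) atTop (𝓝 c)) : Tendsto u atTop atTop := by
  refine (tendsto_natCast_atTop_atTop.atTop_mul_pos hc hu).congr' ?_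
  filter_upwards [eventually_ne_atTop 0] with k hk
  field_simp

theorem tendsto_atBot_of_tendsto_div_natCast {u : ℕ → ℝ} {c : ℝ} (hc : c < 0)
    (hu : Tendsto (fun k => u k / k) atTop (𝓝 c)) : Tendsto u atTop atBot := by
  refine (tendsto_natCast_atTop_atTop.atTop_mul_neg hc hu).congr' ?_
  filter_upwards [eventually_ne_atTop 0] with k hk
  field_simp

theorem tendsto_sub_div_natCast_zero {u : ℕ → ℝ} {c : ℝ}
    (hu : Tendsto (fun k => u k / k) atTop (𝓝 c)) :
    Tendsto (fun k => (u (k + 1) - u k) / k) atTop (𝓝 0) := by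
  have hsucc : Tendsto (fun k : ℕ => u (k + 1) / k) atTop (𝓝 c) := by
    have h := ((tendsto_add_atTop_iff_nat 1).2 hu).div (tendsto_natCast_div_add_atTop (1 : ℝ))
      one_ne_zero
    rw [div_one] at h
    refine h.congr' ?_
    filter_upwards [eventually_ne_atTop 0] with k hk
    simp only [Pi.div_apply]
    push_cast
    field_simp
  simpa [sub_div] using hsucc.sub hu

theorem IsClassKInf.tendsto_zero_of_tendsto_comp {α : ℝ → ℝ} (hα : IsClassKInf α) {ι : Type*}
    {l : Filter ι} {y : ι → ℝ} (hy : ∀ i, 0 ≤ y i) (h : Tendsto (fun i => α (y i)) l (𝓝 0)) :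
    Tendsto y l (𝓝 0) := by
  obtain ⟨-, hmono, hzero, -, -⟩ := hα
  refine tendsto_order.2 ⟨fun a ha => .of_forall fun i => ha.trans_le (hy i), fun ε hε => ?_⟩
  have hαε : 0 < α ε := hzero ▸ hmono self_mem_Ici hε.le hε
  filter_upwards [(tendsto_order.1 h).2 _ hαε] with i hi
  exact (hmono.lt_iff_lt (hy i) hε.le).1 hi

theorem tendsto_zero_of_le_on_Icc {τ : ℕ → ℝ} {f : ℝ → ℝ} {B : ℕ → ℝ} (hτ : Monotone τ)
    (hτ_top : Tendsto τ atTop atTop) (hf : ∀ t, 0 ≤ f t)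
    (hfB : ∀ k, ∀ t ∈ Icc (τ k) (τ (k + 1)), f t ≤ B k) (hB : Tendsto B atTop (𝓝 0)) :
    Tendsto f atTop (𝓝 0) := by
  refine tendsto_order.2 ⟨fun a ha => .of_forall fun t => ha.trans_le (hf t), fun ε hε => ?_⟩
  obtain ⟨K, hK⟩ := eventually_atTop.1 ((tendsto_order.1 hB).2 ε hε)
  refine eventually_atTop.2 ⟨τ K, fun t ht => ?_⟩
  have hcover := biUnion_Ici_Ico_map_succ (fun i hi => hτ hi)
    (not_bddAbove_iff.2 fun b =>
      let ⟨i, hi⟩ := ((hτ_top.eventually_gt_atTop b).and (eventually_ge_atTop K)).exists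
      ⟨τ i, mem_image_of_mem τ hi.2, hi.1⟩)
  obtain ⟨k, hk, htk⟩ := mem_iUnion₂.1 (by rw [hcover]; exact ht)
  exact (hfB k t (Ico_subset_Icc_self htk)).trans_lt (hK k hk)

section SwitchedLyapunov

variable {τ : ℕ → ℝ} {U g : ℕ → ℝ → ℝ} {μ : ℝ}

theorem le_mul_pow_mul_exp_sum_integral (hτ : Monotone τ) (hμ : 0 ≤ μ)
    (hgron : ∀ k, ∀ t ∈ Icc (τ k) (τ (k + 1)),
      U k t ≤ U k (τ k) * Real.exp (∫ s in τ k..t, g k s))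
    (hjump : ∀ k, U (k + 1) (τ (k + 1)) ≤ μ * U k (τ (k + 1))) (k : ℕ) :
    U k (τ k) ≤
      U 0 (τ 0) * μ ^ k * Real.exp (∑ i ∈ Finset.range k, ∫ s in τ i..τ (i + 1), g i s) := by
  induction k with
  | zero => simp
  | succ k ih =>
    calc U (k + 1) (τ (k + 1))
        ≤ μ * (U k (τ k) * Real.exp (∫ s in τ k..τ (k + 1), g k s)) :=
          (hjump k).trans <| by gcongr; exact hgron k _ ⟨hτ k.le_succ, le_rfl⟩
      _ ≤ μ * (U 0 (τ 0) * μ ^ k *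
            Real.exp (∑ i ∈ Finset.range k, ∫ s in τ i..τ (i + 1), g i s) *
            Real.exp (∫ s in τ k..τ (k + 1), g k s)) := by gcongr
      _ = _ := by rw [pow_succ, Finset.sum_range_succ, Real.exp_add]; ring

theorem tendsto_zero_of_le_switched_lyapunov {f : ℝ → ℝ} {L c : ℝ} (hτ : Monotone τ)
    (hτ_top : Tendsto τ atTop atTop) (hf : ∀ t, 0 ≤ f t)
    (hfU : ∀ k, ∀ t ∈ Icc (τ k) (τ (k + 1)), f t ≤ U k t)
    (hgron : ∀ k, ∀ t ∈ Icc (τ k) (τ (k + 1)),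
      U k t ≤ U k (τ k) * Real.exp (∫ s in τ k..t, g k s))
    (hjump : ∀ k, U (k + 1) (τ (k + 1)) ≤ μ * U k (τ (k + 1))) (hμ : 0 < μ)
    (hgL : ∀ k s, |g k s| ≤ L)
    (hdwell : Tendsto (fun k => (τ (k + 1) - τ k) / k) atTop (𝓝 0))
    (hrate : Tendsto (fun k => (∑ i ∈ Finset.range k, ∫ s in τ i..τ (i + 1), g i s) / k)
      atTop (𝓝 c))
    (hdrift : c + Real.log μ < 0) :
    Tendsto f atTop (𝓝 0) := by
  set e : ℕ → ℝ := fun k => k * Real.log μ +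
    (∑ i ∈ Finset.range k, ∫ s in τ i..τ (i + 1), g i s) + L * (τ (k + 1) - τ k)
  have hL : 0 ≤ L := (abs_nonneg _).trans (hgL 0 0)
  have hbound : ∀ k, ∀ t ∈ Icc (τ k) (τ (k + 1)), f t ≤ U 0 (τ 0) * Real.exp (e k) := by
    intro k t ht
    have hUk : 0 ≤ U k (τ k) := (hf _).trans (hfU k _ ⟨le_rfl, hτ k.le_succ⟩)
    have hswitch := le_mul_pow_mul_exp_sum_integral hτ hμ.le hgron hjump k
    have hint : ∫ s in τ k..t, g k s ≤ L * (τ (k + 1) - τ k) := by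
      have h := intervalIntegral.norm_integral_le_of_norm_le_const (a := τ k) (b := t)
        fun s _ => (Real.norm_eq_abs _).trans_le (hgL k s)
      rw [Real.norm_eq_abs, abs_of_nonneg (sub_nonneg.2 ht.1)] at h
      calc ∫ s in τ k..t, g k s ≤ L * (t - τ k) := (le_abs_self _).trans h
        _ ≤ L * (τ (k + 1) - τ k) := by gcongr; exact ht.2
    calc f t ≤ U k (τ k) * Real.exp (∫ s in τ k..t, g k s) := (hfU k t ht).trans (hgron k t ht)
      _ ≤ U 0 (τ 0) * μ ^ k *
            Real.exp (∑ i ∈ Finset.range k, ∫ s in τ i..τ (i + 1), g i s) *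
            Real.exp (L * (τ (k + 1) - τ k)) :=
        mul_le_mul hswitch (Real.exp_le_exp.2 hint) (Real.exp_pos _).le (hUk.trans hswitch)
      _ = U 0 (τ 0) * Real.exp (e k) := by
        rw [← Real.exp_log hμ, ← Real.exp_nat_mul]
        simp only [e, Real.exp_add]
        ring
  have he : Tendsto e atTop atBot := by
    refine tendsto_atBot_of_tendsto_div_natCast (c := Real.log μ + c + L * 0)
      (by rw [mul_zero, add_zero]; linarith)
      (((tendsto_const_nhds.add hrate).add (hdwell.const_mul L)).congr' ?_)
    filter_upwards [eventually_ne_atTop 0] with k hk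
    simp only [e]
    field_simp
  refine tendsto_zero_of_le_on_Icc hτ hτ_top hf hbound ?_
  simpa using (Real.tendsto_exp_atBot.comp he).const_mul (U 0 (τ 0))

end SwitchedLyapunov

section Renewal

variable {Ω : Type*} {S : ℕ → Ω → ℝ} {ω : Ω}

theorem renewalTime_zero : renewalTime S 0 ω = 0 := by
  simp [renewalTime]

theorem renewalTime_succ (k : ℕ) : renewalTime S (k + 1) ω = renewalTime S k ω + S (k + 1) ω :=
  Finset.sum_Icc_succ_top (Nat.le_add_left 1 k) _

theorem renewalTime_eq_sum_range (k : ℕ) :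
    renewalTime S k ω = ∑ i ∈ Finset.range k, S (i + 1) ω := by
  induction k with
  | zero => simp [renewalTime_zero]
  | succ k ih => rw [renewalTime_succ, Finset.sum_range_succ, ih]

theorem strictMono_renewalTime (hS : ∀ k, 0 < S (k + 1) ω) :
    StrictMono fun k => renewalTime S k ω :=
  strictMono_nat_of_lt_succ fun k => by simpa [renewalTime_succ] using hS k

theorem renewalTime_nonneg (hS : ∀ k, 0 < S (k + 1) ω) (k : ℕ) : 0 ≤ renewalTime S k ω :=
  renewalTime_zero (S := S) ▸ (strictMono_renewalTime hS).monotone k.zero_le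

end Renewal

theorem ae_tendsto_sum_range_succ_div {Ω : Type*} [MeasurableSpace Ω] {P : Measure Ω}
    {X : ℕ → Ω → ℝ} (hindep : Pairwise fun i j => IndepFun (X i) (X j) P)
    (hident : ∀ k ≥ 1, IdentDistrib (X k) (X 1) P P)
    (hint : Integrable (X 1) P) :
    ∀ᵐ ω ∂P, Tendsto (fun n : ℕ => (∑ i ∈ Finset.range n, X (i + 1) ω) / n) atTop
      (𝓝 (∫ ω, X 1 ω ∂P)) :=
  strong_law_ae_real (fun i => X (i + 1)) hint
    (fun i j hij => hindep (by simpa using hij))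
    (fun i => hident (i + 1) (Nat.le_add_left 1 i))

theorem stmt_15_general {Ω : Type*} [MeasurableSpace Ω] (P : Measure Ω)
    {𝕊 : Type*} (n : ℕ)
    -- the i.i.d. dwell times
    (S : ℕ → Ω → ℝ)
    (hSindep : iIndepFun S P)
    (hSident : ∀ k ≥ 1, IdentDistrib (S k) (S 1) P P)
    (hSpos : ∀ᵐ ω ∂P, 0 < S 1 ω)
    (hSint : Integrable (S 1) P)
    (θ : ℝ) (hθpos : 0 < θ) (hθ : (∫ ω, S 1 ω ∂P) = θ)
    -- the random modes
    (r : ℕ → Ω → 𝕊)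
    -- the mode-dependent rates, continuous and uniformly bounded
    (lam : 𝕊 → ℝ → ℝ) (hlam : ∀ i, Continuous (lam i))
    (L : ℝ) (hlamL : ∀ i, ∀ s : ℝ, |lam i s| ≤ L)
    -- the per-interval integrals form an i.i.d. integrable sequence with mean `≤ w̄`
    (W : ℕ → Ω → ℝ)
    (hW : ∀ᵐ ω ∂P, ∀ k, W (k + 1) ω =
      ∫ h in (renewalTime S k ω)..(renewalTime S (k + 1) ω), lam (r k ω) h)
    (hWindep : iIndepFun W P)
    (hWident : ∀ k ≥ 1, IdentDistrib (W k) (W 1) P P)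
    (hWint : Integrable (W 1) P)
    (wbar : ℝ) (hwbar : (∫ ω, W 1 ω ∂P) ≤ wbar)
    -- jump factor and drift condition
    (μ : ℝ) (hμ : 1 ≤ μ) (hdrift : (wbar + Real.log μ) / θ < 0)
    -- class-K∞ sandwich functions
    (α₁ α₂ : ℝ → ℝ) (hα₁ : IsClassKInf α₁)
    -- pathwise trajectory and Lyapunov functions
    (x : Ω → ℝ → EuclideanSpace ℝ (Fin n))
    (V : Ω → 𝕊 → ℝ → EuclideanSpace ℝ (Fin n) → ℝ)
    (hsandwich : ∀ᵐ ω ∂P, ∀ i, ∀ s ≥ (0 : ℝ), ∀ y : EuclideanSpace ℝ (Fin n),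
      α₁ ‖y‖ ≤ V ω i s y ∧ V ω i s y ≤ α₂ ‖y‖)
    -- Lyapunov condition (ii)
    (hV_cont : ∀ᵐ ω ∂P, ∀ k, ContinuousOn (fun s => V ω (r k ω) s (x ω s))
      (Set.Icc (renewalTime S k ω) (renewalTime S (k + 1) ω)))
    (hV_diff : ∀ᵐ ω ∂P, ∀ k, DifferentiableOn ℝ (fun s => V ω (r k ω) s (x ω s))
      (Set.Ioo (renewalTime S k ω) (renewalTime S (k + 1) ω)))
    (hV_deriv : ∀ᵐ ω ∂P, ∀ k,
      ∀ s ∈ Set.Ioo (renewalTime S k ω) (renewalTime S (k + 1) ω),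
        deriv (fun s' => V ω (r k ω) s' (x ω s')) s ≤
          lam (r k ω) s * V ω (r k ω) s (x ω s))
    -- Lyapunov condition (iii)
    (hjump : ∀ᵐ ω ∂P, ∀ k,
      V ω (r (k + 1) ω) (renewalTime S (k + 1) ω) (x ω (renewalTime S (k + 1) ω)) ≤
        μ * V ω (r k ω) (renewalTime S (k + 1) ω) (x ω (renewalTime S (k + 1) ω))) :
    ∀ᵐ ω ∂P, Filter.Tendsto (fun s => x ω s) Filter.atTop (nhds 0) := by
  have hdrift' : (∫ ω, W 1 ω ∂P) + Real.log μ < 0 := by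
    linarith [neg_of_div_neg_left hdrift hθpos.le]
  have hS_pos : ∀ᵐ ω ∂P, ∀ k, 0 < S (k + 1) ω := ae_all_iff.2 fun k =>
    (hSident (k + 1) (Nat.le_add_left 1 k)).symm.ae_snd measurableSet_Ioi hSpos
  have hS_lln := ae_tendsto_sum_range_succ_div (fun i j hij => hSindep.indepFun hij) hSident hSint
  have hW_lln := ae_tendsto_sum_range_succ_div (fun i j hij => hWindep.indepFun hij) hWident hWint
  filter_upwards [hS_pos, hS_lln, hW_lln, hW, hsandwich, hV_cont, hV_diff, hV_deriv, hjump]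
    with ω hSω hS_llnω hW_llnω hWω hsandω hVcω hVdω hV'ω hjumpω
  set τ := fun k => renewalTime S k ω
  have hτ : StrictMono τ := strictMono_renewalTime hSω
  have hτ_div : Tendsto (fun k => τ k / k) atTop (𝓝 θ) := by
    simpa only [τ, renewalTime_eq_sum_range, hθ] using hS_llnω
  rw [tendsto_zero_iff_norm_tendsto_zero]
  refine hα₁.tendsto_zero_of_tendsto_comp (fun t => norm_nonneg _) <|
    tendsto_zero_of_le_switched_lyapunov (U := fun k t => V ω (r k ω) t (x ω t))
      (g := fun k => lam (r k ω)) hτ.monotone (tendsto_atTop_of_tendsto_div_natCast hθpos hτ_div)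
      (fun t => hα₁.2.2.2.1 _ (norm_nonneg _))
      (fun k t ht => (hsandω _ t ((renewalTime_nonneg hSω k).trans ht.1) _).1)
      (fun k t ht => le_mul_exp_integral_of_deriv_le (hlam _) (hVcω k) (hVdω k) (hV'ω k) ht)
      hjumpω (zero_lt_one.trans_le hμ) (fun k => hlamL _)
      (by simpa only [τ, renewalTime_succ, add_sub_cancel_left] using
        tendsto_sub_div_natCast_zero hτ_div)
      (by simpa only [τ, ← hWω] using hW_llnω) hdrift'

/-- Almost-sure attractivity for time-varying systems under renewal-process switching:
with K∞-sandwiched mode-dependent indefinite Lyapunov functions whose rates have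
i.i.d. per-dwell-interval integrals `W_k` with mean at most `w̄`, and a common jump
factor `μ ≥ 1`, if `(w̄ + ln μ)/θ < 0` then almost surely `x(t) → 0` as `t → ∞`. -/
theorem stmt_15 {Ω : Type*} [MeasurableSpace Ω] (P : Measure Ω) [IsProbabilityMeasure P]
    {𝕊 : Type*} [Fintype 𝕊] (n : ℕ)
    -- the i.i.d. dwell times
    (S : ℕ → Ω → ℝ) (hSmeas : ∀ k, Measurable (S k))
    (hSindep : iIndepFun S P)
    (hSident : ∀ k ≥ 1, IdentDistrib (S k) (S 1) P P)
    (hSpos : ∀ᵐ ω ∂P, 0 < S 1 ω)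
    (hSint : Integrable (S 1) P)
    (θ : ℝ) (hθpos : 0 < θ) (hθ : (∫ ω, S 1 ω ∂P) = θ)
    -- the random modes
    (r : ℕ → Ω → 𝕊)
    -- the mode-dependent rates, continuous and uniformly bounded
    (lam : 𝕊 → ℝ → ℝ) (hlam : ∀ i, Continuous (lam i))
    (L : ℝ) (hL : 0 < L) (hlamL : ∀ i, ∀ s : ℝ, |lam i s| ≤ L)
    -- the per-interval integrals form an i.i.d. integrable sequence with mean `≤ w̄`
    (W : ℕ → Ω → ℝ) (hWmeas : ∀ k, Measurable (W k))
    (hW : ∀ᵐ ω ∂P, ∀ k, W (k + 1) ω =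
      ∫ h in (renewalTime S k ω)..(renewalTime S (k + 1) ω), lam (r k ω) h)
    (hWindep : iIndepFun W P)
    (hWident : ∀ k ≥ 1, IdentDistrib (W k) (W 1) P P)
    (hWint : Integrable (W 1) P)
    (wbar : ℝ) (hwbar : (∫ ω, W 1 ω ∂P) ≤ wbar)
    -- jump factor and drift condition
    (μ : ℝ) (hμ : 1 ≤ μ) (hdrift : (wbar + Real.log μ) / θ < 0)
    -- class-K∞ sandwich functions
    (α₁ α₂ : ℝ → ℝ) (hα₁ : IsClassKInf α₁) (hα₂ : IsClassKInf α₂)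
    -- pathwise trajectory and Lyapunov functions
    (x : Ω → ℝ → EuclideanSpace ℝ (Fin n))
    (V : Ω → 𝕊 → ℝ → EuclideanSpace ℝ (Fin n) → ℝ)
    (hx_cont : ∀ᵐ ω ∂P, ContinuousOn (x ω) (Set.Ici 0))
    (hsandwich : ∀ᵐ ω ∂P, ∀ i, ∀ s ≥ (0 : ℝ), ∀ y : EuclideanSpace ℝ (Fin n),
      α₁ ‖y‖ ≤ V ω i s y ∧ V ω i s y ≤ α₂ ‖y‖)
    -- Lyapunov condition (ii)
    (hV_cont : ∀ᵐ ω ∂P, ∀ k, ContinuousOn (fun s => V ω (r k ω) s (x ω s))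
      (Set.Icc (renewalTime S k ω) (renewalTime S (k + 1) ω)))
    (hV_diff : ∀ᵐ ω ∂P, ∀ k, DifferentiableOn ℝ (fun s => V ω (r k ω) s (x ω s))
      (Set.Ioo (renewalTime S k ω) (renewalTime S (k + 1) ω)))
    (hV_deriv : ∀ᵐ ω ∂P, ∀ k,
      ∀ s ∈ Set.Ioo (renewalTime S k ω) (renewalTime S (k + 1) ω),
        deriv (fun s' => V ω (r k ω) s' (x ω s')) s ≤
          lam (r k ω) s * V ω (r k ω) s (x ω s))
    -- Lyapunov condition (iii)
    (hjump : ∀ᵐ ω ∂P, ∀ k,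
      V ω (r (k + 1) ω) (renewalTime S (k + 1) ω) (x ω (renewalTime S (k + 1) ω)) ≤
        μ * V ω (r k ω) (renewalTime S (k + 1) ω) (x ω (renewalTime S (k + 1) ω))) :
    ∀ᵐ ω ∂P, Filter.Tendsto (fun s => x ω s) Filter.atTop (nhds 0) :=
  stmt_15_general P n S hSindep hSident hSpos hSint θ hθpos hθ r lam hlam L hlamL W hW hWindep
    hWident hWint wbar hwbar μ hμ hdrift α₁ α₂ hα₁ x V hsandwich hV_cont hV_diff hV_deriv hjump
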